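/- arXiv:2012.15292 — 6 statements merged into one kernel-verified Lean document; each statement's English description precedes it below -/
import Mathlib

section
/- Let C be a field of characteristic zero and let f, g ∈ C[[t]] be formal power series. Then Φ_τ(f) = g if and only if 𝔅(g) = 𝔅(f)·exp(t), where exp(t) = Σ_{n≥0} tⁿ/n!. -/
noncomputable section

/-- Substitution of a power series `u` (assumed to have zero constant term)
into a power series `p`, i.e. `p(u)`, defined coefficientwise. -/
def PowerSeries.substPS {R : Type*} [CommRing R] (u p : PowerSeries R) : PowerSeries R :=
  PowerSeries.mk fun k =>
    ∑ n ∈ Finset.range (k + 1), PowerSeries.coeff n p * PowerSeries.coeff k (u ^ n)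

/-- The Borel transform `𝔅 : C[[t]] → C[[t]]`, `Σ gₙ tⁿ ↦ Σ (gₙ/n!) tⁿ`. -/
def PowerSeries.borel {C : Type*} [Field C] (f : PowerSeries C) : PowerSeries C :=
  PowerSeries.mk fun n => (n.factorial : C)⁻¹ * PowerSeries.coeff n f

/-- The map `Φ_τ : f(t) ↦ (1/(1-t))·f(t/(1-t))`. -/
def PowerSeries.phiTau {C : Type*} [Field C] (f : PowerSeries C) : PowerSeries C :=
  (1 - PowerSeries.X)⁻¹ *
    PowerSeries.substPS (PowerSeries.X * (1 - PowerSeries.X)⁻¹) f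

/-! Coefficientwise, `Φ_τ` is the binomial transform `g_k = ∑_{n ≤ k} (k choose n) f_n`, because
`(1 - t)⁻¹ (t / (1 - t))ⁿ = tⁿ (1 - t)^{-(n+1)}` has `k`-th coefficient `k choose n`. Dividing by
`k!` turns this binomial convolution into the Cauchy product of `𝔅(f)` with `exp`, and `𝔅` is
injective in characteristic zero. -/

open Finset

namespace PowerSeries

section Substitution

variable {R : Type*} [CommRing R]

lemma coeff_pow_of_constantCoeff_eq_zero {u : R⟦X⟧} (hu : constantCoeff u = 0) {n j : ℕ}
    (hj : j < n) : coeff j (u ^ n) = 0 :=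
  X_pow_dvd_iff.mp (pow_dvd_pow_of_dvd (X_dvd_iff.mpr hu) n) j hj

lemma coeff_mul_substPS {u : R⟦X⟧} (hu : constantCoeff u = 0) (v f : R⟦X⟧) (k : ℕ) :
    coeff k (v * substPS u f) = ∑ n ∈ range (k + 1), coeff n f * coeff k (v * u ^ n) := by
  have inner (p : ℕ × ℕ) (hp : p ∈ HasAntidiagonal.antidiagonal k) :
      coeff p.1 v * coeff p.2 (substPS u f) =
        ∑ n ∈ range (k + 1), coeff n f * (coeff p.1 v * coeff p.2 (u ^ n)) := by
    rw [HasAntidiagonal.mem_antidiagonal] at hp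
    have vanish : ∀ n ∈ range (k + 1), n ∉ range (p.2 + 1) →
        coeff n f * (coeff p.1 v * coeff p.2 (u ^ n)) = 0 := fun n _ hn => by
      rw [coeff_pow_of_constantCoeff_eq_zero hu (by simpa using hn), mul_zero, mul_zero]
    rw [substPS, coeff_mk, mul_sum, ← sum_subset (range_subset_range.2 (by omega)) vanish]
    exact sum_congr rfl fun n _ => by ring
  rw [coeff_mul, sum_congr rfl inner, sum_comm]
  simp only [coeff_mul, mul_sum]

end Substitution

variable {C : Type*} [Field C]

lemma inv_one_sub_X_eq_mk_one : (1 - X : C⟦X⟧)⁻¹ = mk 1 :=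
  (inv_eq_iff_mul_eq_one (by simp)).mpr (mk_one_mul_one_sub_eq_one C)

lemma coeff_inv_one_sub_X_mul_pow (n k : ℕ) :
    coeff k ((1 - X)⁻¹ * (X * (1 - X)⁻¹) ^ n : C⟦X⟧) = k.choose n := by
  have hprod : ((1 - X)⁻¹ * (X * (1 - X)⁻¹) ^ n : C⟦X⟧) =
      X ^ n * mk fun m => ((n + m).choose n : C) := by
    rw [← mk_one_pow_eq_mk_choose_add, mul_pow, inv_one_sub_X_eq_mk_one]
    ring
  rw [hprod, coeff_X_pow_mul', coeff_mk]
  split_ifs with h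
  · rw [Nat.add_sub_cancel' h]
  · rw [Nat.choose_eq_zero_of_lt (by omega), Nat.cast_zero]

theorem coeff_phiTau (f : C⟦X⟧) (k : ℕ) :
    coeff k (phiTau f) = ∑ n ∈ range (k + 1), (k.choose n : C) * coeff n f := by
  rw [phiTau, coeff_mul_substPS (by simp)]
  exact sum_congr rfl fun n _ => by rw [coeff_inv_one_sub_X_mul_pow, mul_comm]

lemma coeff_borel (f : C⟦X⟧) (k : ℕ) : coeff k (borel f) = (k.factorial : C)⁻¹ * coeff k f :=
  coeff_mk _ _

variable [CharZero C]

lemma borel_injective : Function.Injective (borel (C := C)) := fun f g h => by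
  ext k
  have hk : (k.factorial : C)⁻¹ ≠ 0 := inv_ne_zero (Nat.cast_ne_zero.2 k.factorial_ne_zero)
  simpa only [coeff_borel, mul_right_inj' hk] using congrArg (coeff k) h

theorem borel_phiTau (f : C⟦X⟧) : borel (phiTau f) = borel f * exp C := by
  ext k
  rw [coeff_borel, coeff_phiTau, coeff_mul, Nat.sum_antidiagonal_eq_sum_range_succ_mk, mul_sum]
  refine sum_congr rfl fun n hn => ?_
  have hnk : n ≤ k := Nat.lt_succ_iff.mp (mem_range.mp hn)
  have hk : (k.factorial : C) ≠ 0 := Nat.cast_ne_zero.2 k.factorial_ne_zero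
  simp only [coeff_borel, coeff_exp, one_div, map_inv₀, map_natCast, Nat.cast_choose C hnk]
  field_simp

end PowerSeries

/-- `Φ_τ(f) = g` if and only if `𝔅(g) = 𝔅(f)·exp(t)`. -/
theorem phiTau_eq_iff_borel_mul_exp {C : Type*} [Field C] [CharZero C]
    (f g : PowerSeries C) :
    PowerSeries.phiTau f = g ↔ PowerSeries.borel g = PowerSeries.borel f * PowerSeries.exp C := by
  rw [← PowerSeries.borel_phiTau, PowerSeries.borel_injective.eq_iff, eq_comm]

end
end

section
/- Let B_n denote the n-th Bell number (the number of partitions of a set with n elements, with B_0 = 1) and let B(t) := Σ_{n≥0} B_n tⁿ ∈ ℚ[[t]] be the ordinary generating function of the Bell numbers. Then B satisfies the first-order difference equation B(t/(1+t)) = t·B(t) + 1 in ℚ[[t]]. -/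
noncomputable section

/-- The `n`-th Bell number: the number of partitions of a set with `n` elements. -/
def bellNumber (n : ℕ) : ℕ :=
  Nat.card (Finpartition (Finset.univ : Finset (Fin n)))

/-! Sorting the partitions of `insert a s` by the block `insert a t` of `a` gives Bell's recurrence
`B (n + 1) = ∑ i, (n choose i) * B i`, so `bellNumber = Nat.bell`. The `(m + 1)`-st coefficient of
`(t / (1 + t)) ^ (j + 1)` is `(-1) ^ (m - j) * (m choose j)`, so the `(m + 1)`-st coefficient of
`B (t / (1 + t))` is the inverse binomial transform of `j ↦ B (j + 1)`; by the recurrence and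
binomial inversion it is `B m`, the `(m + 1)`-st coefficient of `t * B t + 1`. -/

open Finset

namespace Finpartition

variable {α : Type*} [DecidableEq α] {s t : Finset α} {a : α}

lemma card_filter_part_erase_eq (ha : a ∉ s) (ht : t ⊆ s) :
    #{P : Finpartition (insert a s) | (P.part a).erase a = t} =
      Fintype.card (Finpartition (s \ t)) := by
  have hat : a ∉ t := fun h => ha (ht h)
  have hsdiff : insert a s \ insert a t = s \ t := by
    rw [insert_sdiff_insert, sdiff_insert_of_notMem ha]
  have hdisj : Disjoint (s \ t) (insert a t) := by
    rw [disjoint_insert_right]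
    exact ⟨fun h => ha (mem_sdiff.1 h).1, sdiff_disjoint⟩
  have hunion : s \ t ⊔ insert a t = insert a s := by
    rw [sup_eq_union, union_insert, sdiff_union_of_subset ht]
  rw [← card_univ]
  refine card_nbij' (fun P => (P.avoid (insert a t)).copy hsdiff)
    (fun Q => Q.extend (insert_ne_empty a t) hdisj hunion)
    (fun _ _ => mem_coe.2 (mem_univ _)) ?_ ?_ ?_
  · intro Q _
    have hpart : (Q.extend (insert_ne_empty a t) hdisj hunion).part a = insert a t :=
      part_eq_of_mem _ (by simp) (mem_insert_self a t)
    simp [hpart, erase_insert hat]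
  · intro P hP
    simp only [coe_filter, mem_univ, true_and, Set.mem_ofPred_eq] at hP
    have hpart : P.part a = insert a t := by
      rw [← hP, insert_erase (P.mem_part_self.2 (mem_insert_self a s))]
    have hmem : insert a t ∈ P.parts := hpart ▸ P.part_mem.2 (mem_insert_self a s)
    have hdisjP {q : Finset α} (hq : q ∈ P.parts) (hne : q ≠ insert a t) :
        Disjoint q (insert a t) := P.disjoint hq hmem hne
    ext p
    simp only [extend_parts, copy_parts, mem_insert, mem_avoid]
    constructor
    · rintro (rfl | ⟨q, hq, hqB, rfl⟩)
      · exact hmem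
      · have hne : q ≠ insert a t := by rintro rfl; exact hqB le_rfl
        rwa [sdiff_eq_self_of_disjoint (hdisjP hq hne)]
    · intro hp
      by_cases hpB : p = insert a t
      · exact Or.inl hpB
      · exact Or.inr ⟨p, hp, fun hle => P.ne_empty hp ((hdisjP hp hpB).eq_bot_of_le hle),
          sdiff_eq_self_of_disjoint (hdisjP hp hpB)⟩
  · intro Q _
    ext p
    simp only [copy_parts, mem_avoid, extend_parts, mem_insert]
    constructor
    · rintro ⟨q, rfl | hq, hqB, rfl⟩
      · exact absurd le_rfl hqB
      · rwa [sdiff_eq_self_of_disjoint (hdisj.mono_left (Q.le hq))]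
    · intro hp
      have hd := hdisj.mono_left (Q.le hp)
      exact ⟨p, Or.inr hp, fun hle => Q.ne_empty hp (hd.eq_bot_of_le hle),
        sdiff_eq_self_of_disjoint hd⟩

lemma card_insert (ha : a ∉ s) :
    Fintype.card (Finpartition (insert a s)) =
      ∑ t ∈ s.powerset, Fintype.card (Finpartition (s \ t)) := by
  rw [← card_univ (α := Finpartition _), card_eq_sum_card_fiberwise
    (f := fun P => (P.part a).erase a) (t := s.powerset)
    fun P _ => mem_powerset.2 (subset_insert_iff.1 (P.part_subset a))]
  exact sum_congr rfl fun t ht => card_filter_part_erase_eq ha (mem_powerset.1 ht)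

theorem card_eq_bell (s : Finset α) : Fintype.card (Finpartition s) = Nat.bell #s := by
  induction s using Finset.strongInduction with | H s ih =>
  rcases s.eq_empty_or_nonempty with rfl | ⟨a, ha⟩
  · exact Fintype.card_unique (α := Finpartition (⊥ : Finset α)).trans Nat.bell_zero.symm
  have hsub (t : Finset α) : s.erase a \ t ⊂ s := sdiff_subset.trans_ssubset (erase_ssubset ha)
  rw [← insert_erase ha, card_insert (notMem_erase a s), card_insert_of_notMem (notMem_erase a s),
    sum_congr rfl fun t ht => by rw [ih _ (hsub t), card_sdiff_of_subset (mem_powerset.1 ht)],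
    sum_powerset_apply_card (fun k => Nat.bell (#(s.erase a) - k)), Nat.bell_succ,
    Nat.range_succ_eq_Iic]
  simp only [smul_eq_mul]

end Finpartition

theorem Nat.bell_succ_eq_sum_choose_mul_bell (n : ℕ) :
    (n + 1).bell = ∑ i ∈ range (n + 1), n.choose i * i.bell := by
  rw [Nat.bell_succ, ← Nat.range_succ_eq_Iic, ← sum_range_reflect]
  refine sum_congr rfl fun i hi => ?_
  have hi : i ≤ n := Nat.lt_succ_iff.1 (mem_range.1 hi)
  rw [Nat.add_sub_cancel, Nat.choose_symm hi, Nat.sub_sub_self hi]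

theorem bellNumber_eq_bell (n : ℕ) : bellNumber n = n.bell := by
  rw [bellNumber, Nat.card_eq_fintype_card, Finpartition.card_eq_bell, card_univ, Fintype.card_fin]

section BinomialInversion

variable {R : Type*} [CommRing R]

open Polynomial in
theorem sum_range_neg_one_pow_mul_choose_mul_choose (m i : ℕ) :
    ∑ j ∈ range (m + 1), (-1 : R) ^ (m - j) * m.choose j * j.choose i =
      if i = m then 1 else 0 := by
  have h := congrArg (coeff · i) (add_pow (X + 1 : R[X]) (-1) m)
  have hC (k : ℕ) : (-1 : R[X]) ^ k = C ((-1) ^ k) := by simp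
  simp only [add_neg_cancel_right, coeff_X_pow, finsetSum_coeff, hC, coeff_mul_natCast,
    coeff_mul_C, coeff_X_add_one_pow] at h
  rw [h]
  exact sum_congr rfl fun j _ => by ring

theorem binomial_inversion {f g : ℕ → R}
    (hg : ∀ j, g j = ∑ i ∈ range (j + 1), j.choose i * f i) (m : ℕ) :
    ∑ j ∈ range (m + 1), (-1 : R) ^ (m - j) * m.choose j * g j = f m := by
  calc ∑ j ∈ range (m + 1), (-1 : R) ^ (m - j) * m.choose j * g j
      = ∑ j ∈ range (m + 1), ∑ i ∈ range (m + 1),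
          (-1 : R) ^ (m - j) * m.choose j * (j.choose i * f i) := by
        refine sum_congr rfl fun j hj => ?_
        rw [hg, ← mul_sum]
        congr 1
        refine sum_subset (range_subset_range.2 (mem_range.1 hj)) fun i _ hi => ?_
        rw [Nat.choose_eq_zero_of_lt (by simpa using hi), Nat.cast_zero, zero_mul]
    _ = ∑ i ∈ range (m + 1),
          (∑ j ∈ range (m + 1), (-1 : R) ^ (m - j) * m.choose j * j.choose i) * f i := by
        rw [sum_comm]
        simp only [sum_mul, mul_assoc]
    _ = f m := by simp [sum_range_neg_one_pow_mul_choose_mul_choose]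

end BinomialInversion

namespace PowerSeries

variable {k : Type*} [Field k]

theorem inv_one_add_X : (1 + X : k⟦X⟧)⁻¹ = rescale (-1) (mk 1) := by
  have hX : (1 + X : k⟦X⟧) = rescale (-1) (1 - X) := by simp
  rw [inv_eq_iff_mul_eq_one (by simp), hX, ← map_mul, mk_one_mul_one_sub_eq_one, map_one]

theorem coeff_inv_one_add_X_pow_succ (d n : ℕ) :
    coeff n ((1 + X : k⟦X⟧)⁻¹ ^ (d + 1)) = (-1) ^ n * ((d + n).choose d : k) := by
  rw [inv_one_add_X, ← map_pow, mk_one_pow_eq_mk_choose_add, coeff_rescale, coeff_mk]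

theorem coeff_succ_X_mul_inv_one_add_X_pow_succ (m j : ℕ) :
    coeff (m + 1) ((X * (1 + X : k⟦X⟧)⁻¹) ^ (j + 1)) = (-1) ^ (m - j) * (m.choose j : k) := by
  rw [mul_pow, coeff_X_pow_mul', Nat.add_sub_add_right, coeff_inv_one_add_X_pow_succ]
  split_ifs with h
  · rw [Nat.add_sub_cancel' (Nat.le_of_succ_le_succ h)]
  · rw [Nat.choose_eq_zero_of_lt (by omega), Nat.cast_zero, mul_zero]

theorem coeff_succ_substPS_X_mul_inv_one_add_X (p : k⟦X⟧) (m : ℕ) :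
    coeff (m + 1) (substPS (X * (1 + X)⁻¹) p) =
      ∑ j ∈ range (m + 1), (-1) ^ (m - j) * (m.choose j : k) * coeff (j + 1) p := by
  rw [substPS, coeff_mk, sum_range_succ', pow_zero, coeff_one, if_neg m.succ_ne_zero, mul_zero,
    add_zero]
  exact sum_congr rfl fun j _ => by rw [coeff_succ_X_mul_inv_one_add_X_pow_succ, mul_comm]

end PowerSeries

/-- The ordinary generating function `B(t) = Σ Bₙ tⁿ` of the Bell numbers
satisfies `B(t/(1+t)) = t·B(t) + 1` in `ℚ[[t]]`. -/
theorem bell_ogf_tau_equation :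
    PowerSeries.substPS (PowerSeries.X * (1 + PowerSeries.X)⁻¹)
        (PowerSeries.mk fun n => (bellNumber n : ℚ))
      = PowerSeries.X * (PowerSeries.mk fun n => (bellNumber n : ℚ)) + 1 := by
  simp only [bellNumber_eq_bell]
  ext (_ | m)
  · simp [PowerSeries.substPS]
  · rw [PowerSeries.coeff_succ_substPS_X_mul_inv_one_add_X, map_add, PowerSeries.coeff_succ_X_mul,
      PowerSeries.coeff_one, if_neg m.succ_ne_zero, add_zero]
    simp only [PowerSeries.coeff_mk]
    exact binomial_inversion (f := fun n => (n.bell : ℚ))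
      (fun j => by exact_mod_cast Nat.bell_succ_eq_sum_choose_mul_bell j) m

end
end

section
/- Let B_n(x) ∈ ℚ[x] denote the n-th Bernoulli polynomial and let B(x,t) := Σ_{n≥0} B_n(x) tⁿ ∈ (ℚ[x])[[t]] be the ordinary generating function of the Bernoulli polynomials. Then, in (ℚ[x])[[t]], B(x, t/(1+t)) = (1+t)·B(x,t) − t(1+t)·(1+t−tx)^{−2}, where 1+t−tx is a unit of (ℚ[x])[[t]] (its constant term in t is 1). -/
/-!
Comparing coefficients of `t^(m+1)` shows that substituting `t ↦ t/(1+t)` into `∑ aₙ tⁿ` gives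
`(1+t) · ∑ bₘ tᵐ` with `bₘ = ∑ₙ C(m,n) (-1)^(m-n) aₙ`, the binomial transform with step `-1`
(Euler's transform). Binomial transforms compose additively in the step, and the Bernoulli
polynomials are the step-`1` transform of the `Bₙ(x-1)`: this follows from
`∑_{k ≤ n} C(n+1,k) Bₖ(x) = (n+1) xⁿ` and `Bₙ(x+1) = Bₙ(x) + n xⁿ⁻¹`. Hence
`B(x, t/(1+t)) = (1+t) ∑ Bₙ(x-1) tⁿ`, and the same difference equation gives
`∑ Bₙ(x) tⁿ = ∑ Bₙ(x-1) tⁿ + t/(1-(x-1)t)²`, where `1-(x-1)t = 1+t-tx`.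
-/

noncomputable section

section BinomialTransform

open Finset

variable {R : Type*} [CommRing R]

def binomialTransform (r : R) (a : ℕ → R) (m : ℕ) : R :=
  ∑ n ∈ range (m + 1), (m.choose n : R) * (r ^ (m - n) * a n)

@[simp]
theorem binomialTransform_zero_right (r : R) (a : ℕ → R) : binomialTransform r a 0 = a 0 := by
  simp [binomialTransform]

theorem binomialTransform_zero_left (a : ℕ → R) (m : ℕ) : binomialTransform 0 a m = a m := by
  rw [binomialTransform, sum_range_succ, sum_eq_zero fun n hn => ?_]
  · simp
  · simp [zero_pow (Nat.sub_ne_zero_of_lt (mem_range.1 hn))]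

theorem binomialTransform_add (r : R) (a b : ℕ → R) (m : ℕ) :
    binomialTransform r (a + b) m = binomialTransform r a m + binomialTransform r b m := by
  simp only [binomialTransform, Pi.add_apply, mul_add, sum_add_distrib]

theorem binomialTransform_smul (r c : R) (a : ℕ → R) (m : ℕ) :
    binomialTransform r (c • a) m = c * binomialTransform r a m := by
  simp only [binomialTransform, Pi.smul_apply, smul_eq_mul, mul_sum]
  exact sum_congr rfl fun _ _ => by ring

theorem binomialTransform_succ (r : R) (a : ℕ → R) (m : ℕ) :
    binomialTransform r a (m + 1) =
      r * binomialTransform r a m + binomialTransform r (fun n => a (n + 1)) m := by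
  rw [binomialTransform, sum_choose_succ_mul (fun i j => r ^ j * a i), binomialTransform,
    binomialTransform, mul_sum]
  congr 1
  refine sum_congr rfl fun n hn => ?_
  rw [Nat.sub_add_comm (mem_range_succ_iff.1 hn), pow_succ]
  ring

theorem binomialTransform_binomialTransform (r s : R) (a : ℕ → R) (m : ℕ) :
    binomialTransform s (binomialTransform r a) m = binomialTransform (r + s) a m := by
  induction m generalizing a with
  | zero => simp
  | succ m ih =>
    have hshift : (fun n => binomialTransform r a (n + 1)) =
        r • binomialTransform r a + binomialTransform r fun n => a (n + 1) :=
      funext fun n => binomialTransform_succ r a n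
    rw [binomialTransform_succ, hshift, binomialTransform_add, binomialTransform_smul, ih, ih,
      binomialTransform_succ]
    ring

theorem binomialTransform_neg_binomialTransform (r : R) (a : ℕ → R) (m : ℕ) :
    binomialTransform (-r) (binomialTransform r a) m = a m := by
  rw [binomialTransform_binomialTransform, add_neg_cancel, binomialTransform_zero_left]

end BinomialTransform

namespace PowerSeries

open Finset

variable {R : Type*} [CommRing R]

theorem invOfUnit_eq_of_mul_eq_one {f g : R⟦X⟧} (hf : constantCoeff f = 1) (hfg : f * g = 1) :
    invOfUnit f 1 = g :=
  left_inv_eq_right_inv (invOfUnit_mul f 1 (by rw [hf, Units.val_one])) hfg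

theorem invOfUnit_one_sub_C_mul_X (r : R) : invOfUnit (1 - C r * X) 1 = rescale r (mk 1) := by
  refine invOfUnit_eq_of_mul_eq_one (by simp) ?_
  rw [← rescale_X, ← map_one (rescale r), ← map_sub, ← map_mul, mul_comm,
    mk_one_mul_one_sub_eq_one, map_one]

theorem invOfUnit_one_add_X : invOfUnit (1 + X : R⟦X⟧) 1 = rescale (-1) (mk 1) := by
  rw [← invOfUnit_one_sub_C_mul_X, map_neg, map_one, neg_one_mul, sub_neg_eq_add]

theorem coeff_X_mul_invOfUnit_one_add_X_pow (m n : ℕ) :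
    coeff (m + 1) ((X * invOfUnit (1 + X : R⟦X⟧) 1) ^ (n + 1)) =
      (-1) ^ (m - n) * (m.choose n : R) := by
  rw [invOfUnit_one_add_X, mul_pow, ← map_pow, mk_one_pow_eq_mk_choose_add, coeff_X_pow_mul',
    coeff_rescale, coeff_mk]
  split_ifs with h
  · rw [Nat.add_sub_add_right, Nat.add_sub_cancel' (by omega)]
  · rw [Nat.choose_eq_zero_of_lt (by omega), Nat.cast_zero, mul_zero]

theorem substPS_X_mul_invOfUnit_one_add_X (a : ℕ → R) :
    substPS (X * invOfUnit (1 + X) 1) (mk a) = (1 + X) * mk (binomialTransform (-1) a) := by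
  ext (_ | m)
  · simp [substPS, binomialTransform]
  · rw [substPS, coeff_mk, sum_range_succ', add_mul, one_mul, map_add, coeff_succ_X_mul,
      coeff_mk, coeff_mk, binomialTransform_succ]
    simp only [coeff_mk, coeff_X_mul_invOfUnit_one_add_X_pow, pow_zero, coeff_one,
      Nat.add_one_ne_zero, if_false, mul_zero, add_zero]
    have hshift : ∑ n ∈ range (m + 1), a (n + 1) * ((-1) ^ (m - n) * (m.choose n : R)) =
        binomialTransform (-1) (fun n => a (n + 1)) m :=
      sum_congr rfl fun n _ => by ring
    rw [hshift]
    ring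

theorem coeff_X_mul_rescale_mk_one_sq (r : R) (n : ℕ) :
    coeff n (X * rescale r (mk 1) ^ 2) = n * r ^ (n - 1) := by
  cases n with
  | zero => simp
  | succ n =>
    rw [coeff_succ_X_mul, ← map_pow, mk_one_pow_eq_mk_choose_add, coeff_rescale, coeff_mk,
      Nat.add_sub_cancel, add_comm 1 n, Nat.choose_one_right]
    push_cast
    ring

end PowerSeries

namespace Polynomial

open Finset

theorem bernoulli_eq_comp_X_sub_one_add (n : ℕ) :
    bernoulli n = (bernoulli n).comp (X - 1) + (n : ℚ[X]) * (X - 1) ^ (n - 1) := by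
  have h := congr($(bernoulli_comp_one_add_X n).comp (X - 1))
  rwa [comp_assoc, add_comp, one_comp, X_comp, add_sub_cancel, comp_X, add_comp, nsmul_eq_mul,
    natCast_mul_comp, X_pow_comp] at h

theorem bernoulli_eq_binomialTransform_comp_X_sub_one (m : ℕ) :
    bernoulli m = binomialTransform 1 (fun n => (bernoulli n).comp (X - 1)) m := by
  cases m with
  | zero => simp [binomialTransform]
  | succ m =>
    have hsum := congr($(sum_bernoulli m).comp (X - 1))
    simp only [sum_comp, smul_comp, monomial_comp] at hsum
    simp only [Nat.cast_smul_eq_nsmul, nsmul_eq_mul] at hsum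
    rw [binomialTransform, sum_range_succ]
    simp only [one_pow, Nat.choose_self, Nat.cast_one, one_mul]
    conv_lhs => rw [bernoulli_eq_comp_X_sub_one_add (m + 1)]
    rw [hsum, Nat.add_sub_cancel, map_add, map_one, map_natCast]
    push_cast
    ring

theorem binomialTransform_neg_one_bernoulli (m : ℕ) :
    binomialTransform (-1) bernoulli m = (bernoulli m).comp (X - 1) := by
  have h : (bernoulli : ℕ → ℚ[X]) = binomialTransform 1 fun n => (bernoulli n).comp (X - 1) :=
    _root_.funext bernoulli_eq_binomialTransform_comp_X_sub_one
  conv_lhs => rw [h, binomialTransform_neg_binomialTransform]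

theorem mk_bernoulli_eq_mk_comp_X_sub_one_add :
    PowerSeries.mk bernoulli = PowerSeries.mk (fun n => (bernoulli n).comp (X - 1)) +
      PowerSeries.X * PowerSeries.rescale (X - 1) (PowerSeries.mk 1) ^ 2 := by
  refine PowerSeries.ext fun n => ?_
  rw [map_add, PowerSeries.coeff_X_mul_rescale_mk_one_sq, PowerSeries.coeff_mk,
    PowerSeries.coeff_mk]
  exact bernoulli_eq_comp_X_sub_one_add n

end Polynomial

open PowerSeries in
/-- The ordinary generating function `B(x,t) = Σ Bₙ(x) tⁿ ∈ (ℚ[x])[[t]]`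
of the Bernoulli polynomials satisfies
`B(x, t/(1+t)) = (1+t)·B(x,t) − t(1+t)·(1+t−tx)⁻²`, where `t/(1+t)` and `(1+t−tx)⁻¹` are
computed via `invOfUnit` (both `1+t` and `1+t−tx` are units with constant term `1`). -/
theorem bernoulli_ogf_tau_equation :
    substPS (X * invOfUnit (1 + X : PowerSeries (Polynomial ℚ)) 1)
        (mk fun n => Polynomial.bernoulli n)
      = (1 + X) * (mk fun n => Polynomial.bernoulli n)
        - X * (1 + X) *
          (invOfUnit (1 + X - C (Polynomial.X : Polynomial ℚ) * X) 1) ^ 2 := by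
  have hunit : (1 + X - C Polynomial.X * X : (Polynomial ℚ)⟦X⟧) =
      1 - C (Polynomial.X - 1) * X := by
    rw [map_sub, map_one]; ring
  have hT : binomialTransform (-1) Polynomial.bernoulli =
      fun m => (Polynomial.bernoulli m).comp (Polynomial.X - 1) :=
    funext Polynomial.binomialTransform_neg_one_bernoulli
  rw [substPS_X_mul_invOfUnit_one_add_X, hT, hunit, invOfUnit_one_sub_C_mul_X,
    Polynomial.mk_bernoulli_eq_mk_comp_X_sub_one_add]
  ring

end
end

section
/- Let x ∈ ℂ and let t ∈ ℂ with t ≠ −1 and 1 + kt − tx ≠ 0 for every integer k ≥ 1. Define F(x,t) := (1/t)·Σ_{k≥1} t²/(1+kt−tx)² for t ≠ 0 (the series converges absolutely), and for t = 0 interpret both sides as 0 appropriately; then for t ≠ 0 with t/(1+t) also satisfying the nonvanishing conditions, F satisfies the functional equation F(x, t/(1+t)) = (1+t)·F(x,t) − t(1+t)/(1+t−tx)². Equivalently, G(x,t) := Σ_{k≥1} t²/(1+kt−tx)² satisfies G(x, t/(1+t)) = G(x,t) − t²/(1+t−tx)². -/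
noncomputable section

/-- The function `G(x,t) = Σ_{k≥1} t²/(1+kt−tx)²`. -/
def seriesG (x t : ℂ) : ℂ := ∑' k : ℕ, t ^ 2 / (1 + (k + 1 : ℂ) * t - t * x) ^ 2

/-- The function `F(x,t) = (1/t)·Σ_{k≥1} t²/(1+kt−tx)²` (equal to `(1/t)·Ψ'((1+t−tx)/t)`). -/
def seriesF (x t : ℂ) : ℂ := (1 / t) * seriesG x t

/-
Substituting `t ↦ t/(1+t)` and clearing the factor `1/(1+t)` turns the `k`-th term of `G` into
its `(k+1)`-st term, so `G(x, t/(1+t))` is `G(x,t)` with its first term removed; the equation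
for `F` follows by multiplying by `1/(t/(1+t)) = (1+t)/t`.
-/

theorem summable_inv_natCast_add_sq (w : ℂ) : Summable fun n : ℕ => ((n + w) ^ 2)⁻¹ :=
  ((EisensteinSeries.linear_right_summable w 1 le_rfl).comp_injective
    Nat.cast_injective).congr fun n => by simp [add_comm]

theorem summable_sq_div_one_add_mul_sub_sq (x t : ℂ) :
    Summable fun k : ℕ => t ^ 2 / (1 + (k + 1 : ℂ) * t - t * x) ^ 2 := by
  rcases eq_or_ne t 0 with rfl | ht
  · simp [summable_zero]
  refine (summable_inv_natCast_add_sq ((1 - t * x) / t + 1)).congr fun k => ?_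
  field_simp
  ring

theorem sq_div_one_add_mul_sub_sq_div_one_add {x t : ℂ} (ht : 1 + t ≠ 0) (k : ℕ) :
    (t / (1 + t)) ^ 2 / (1 + (k + 1 : ℂ) * (t / (1 + t)) - t / (1 + t) * x) ^ 2
      = t ^ 2 / (1 + ((k + 1 : ℕ) + 1 : ℂ) * t - t * x) ^ 2 := by
  have hclear : 1 + (k + 1 : ℂ) * (t / (1 + t)) - t / (1 + t) * x
      = (1 + ((k + 1 : ℕ) + 1 : ℂ) * t - t * x) / (1 + t) := by
    field_simp
    push_cast
    ring
  rw [hclear, div_pow, div_pow, div_div_div_cancel_right₀ (pow_ne_zero 2 ht)]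

theorem seriesG_div_one_add {x t : ℂ} (ht : 1 + t ≠ 0) :
    seriesG x (t / (1 + t)) = seriesG x t - t ^ 2 / (1 + t - t * x) ^ 2 := by
  have hsplit := (summable_sq_div_one_add_mul_sub_sq x t).tsum_eq_zero_add
  simp only [Nat.cast_zero, zero_add, one_mul] at hsplit
  rw [seriesG, seriesG, hsplit, tsum_congr (sq_div_one_add_mul_sub_sq_div_one_add ht)]
  ring

theorem seriesF_div_one_add {x t : ℂ} (ht : 1 + t ≠ 0) :
    seriesF x (t / (1 + t)) = (1 + t) * seriesF x t - t * (1 + t) / (1 + t - t * x) ^ 2 := by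
  rw [seriesF, seriesF, seriesG_div_one_add ht, one_div_div]
  rcases eq_or_ne t 0 with rfl | ht0
  · simp
  field_simp

theorem trigamma_solution_of_bernoulli_tau_equation_general (x t : ℂ)
    (ht1 : t ≠ -1) :
    Summable (fun k : ℕ => t ^ 2 / (1 + (k + 1 : ℂ) * t - t * x) ^ 2) ∧
    seriesF x (t / (1 + t))
      = (1 + t) * seriesF x t - t * (1 + t) / (1 + t - t * x) ^ 2 ∧
    seriesG x (t / (1 + t)) = seriesG x t - t ^ 2 / (1 + t - t * x) ^ 2 := by
  have ht : 1 + t ≠ 0 := fun h => ht1 (by linear_combination h)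
  exact ⟨summable_sq_div_one_add_mul_sub_sq x t, seriesF_div_one_add ht, seriesG_div_one_add ht⟩

/-- For `x, t ∈ ℂ` with `t ≠ 0`, `t ≠ −1` and `1+kt−tx ≠ 0` for all
integers `k ≥ 1` (for `t` and for `t/(1+t)`), the series defining `G(x,t)` converges
absolutely, and `F(x,t) = (1/t)·Σ_{k≥1} t²/(1+kt−tx)²` satisfies the functional equation
`F(x, t/(1+t)) = (1+t)·F(x,t) − t(1+t)/(1+t−tx)²`; equivalently
`G(x, t/(1+t)) = G(x,t) − t²/(1+t−tx)²`. -/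
theorem trigamma_solution_of_bernoulli_tau_equation (x t : ℂ)
    (ht0 : t ≠ 0) (ht1 : t ≠ -1)
    (h : ∀ k : ℕ, 1 + (k + 1 : ℂ) * t - t * x ≠ 0)
    (h' : ∀ k : ℕ, 1 + (k + 1 : ℂ) * (t / (1 + t)) - (t / (1 + t)) * x ≠ 0) :
    Summable (fun k : ℕ => t ^ 2 / (1 + (k + 1 : ℂ) * t - t * x) ^ 2) ∧
    seriesF x (t / (1 + t))
      = (1 + t) * seriesF x t - t * (1 + t) / (1 + t - t * x) ^ 2 ∧
    seriesG x (t / (1 + t)) = seriesG x t - t ^ 2 / (1 + t - t * x) ^ 2 :=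
  trigamma_solution_of_bernoulli_tau_equation_general x t ht1

end
end

section
/- Let f ∈ ℂ((t)) be a formal Laurent series satisfying f(t/(1+t)) = f(t). Then f is a constant, i.e. f ∈ ℂ. In other words, the field of invariants of the automorphism τ : f(t) ↦ f(t/(1+t)) of ℂ((t)) is exactly ℂ. -/
noncomputable section

/-- Substitution of a power series `u` (with zero constant term and nonzero linear
coefficient) into a formal Laurent series `w`. -/
def LaurentSeries.substL {F : Type*} [Field F] (u : PowerSeries F) (w : LaurentSeries F) :
    LaurentSeries F :=
  ((PowerSeries.substPS u w.powerSeriesPart : PowerSeries F) : LaurentSeries F)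
    * ((u : LaurentSeries F) ^ w.order)

/-- The formal derivative `d/dt` of a formal Laurent series. -/
def LaurentSeries.lderiv {F : Type*} [Field F] (w : LaurentSeries F) : LaurentSeries F :=
  { coeff := fun n => ((n + 1 : ℤ) : F) * w.coeff (n + 1)
    isPWO_support' := by
      refine Set.IsPWO.mono (Set.IsPWO.image_of_monotone w.isPWO_support
        (f := fun m : ℤ => m - 1) fun a b h => by simpa using h) ?_
      intro n hn
      have h1 : w.coeff (n + 1) ≠ 0 := fun h => hn (by simp [Function.mem_support, h])
      exact ⟨n + 1, h1, by ring⟩ }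

/-- A formal Laurent series is convergent (i.e. belongs to `ℂ({t})`) if its coefficients
`a_n` satisfy `Σ_{n ≥ 0} |a_n| rⁿ < ∞` for some real `r > 0`. -/
def LaurentSeries.IsConvergent (w : LaurentSeries ℂ) : Prop :=
  ∃ r : ℝ, 0 < r ∧ Summable fun n : ℕ => ‖w.coeff (n : ℤ)‖ * r ^ n

/-- `w ∈ ℂ((t))` is differentially transcendental over the field `ℂ({t})` of convergent
Laurent series: no nonzero polynomial with convergent Laurent series coefficients
vanishes at `(w, w', …, w⁽ⁿ⁾)`. -/
def LaurentSeries.StronglyDTransc (w : LaurentSeries ℂ) : Prop :=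
  ∀ (n : ℕ) (P : MvPolynomial (Fin (n + 1)) (LaurentSeries ℂ)),
    (∀ m, LaurentSeries.IsConvergent (MvPolynomial.coeff m P)) → P ≠ 0 →
    MvPolynomial.eval (fun i : Fin (n + 1) => LaurentSeries.lderiv^[(i : ℕ)] w) P ≠ 0

/-- The power series `t/(1+t)` over a field. -/
def tauArg (F : Type*) [Field F] : PowerSeries F :=
  PowerSeries.X * (1 + PowerSeries.X)⁻¹

/-!
Write `t/(1+t) = t v` with `v = (1+t)⁻¹ = 1 - t + ⋯` and `f = t^d p` with `p(0) ≠ 0`.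
Invariance gives `t^d p = p(t v) t^d v^d`; the coefficient of `t^{d+1}` yields `d p(0) = 0`, so
`d = 0` and `p(t v) = p`. If `p_{m+1}` were the first nonzero nonconstant coefficient of `p`,
the coefficient of `t^{m+2}` in `p(t v)` would be `p_{m+2} - (m+1) p_{m+1}`, a contradiction.
-/
open PowerSeries
open scoped LaurentSeries

namespace PowerSeries

section CommRing

variable {R : Type*} [CommRing R]

theorem coeff_zero_substPS (u p : R⟦X⟧) : coeff 0 (substPS u p) = constantCoeff p := by
  simp [substPS]

theorem coeff_X_mul_pow (v : R⟦X⟧) (n k : ℕ) :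
    coeff (n + k) ((X * v) ^ n) = coeff k (v ^ n) := by
  rw [mul_pow, add_comm, coeff_X_pow_mul]

variable {v : R⟦X⟧}

theorem coeff_X_mul_pow_self (hv : constantCoeff v = 1) (n : ℕ) :
    coeff n ((X * v) ^ n) = 1 := by
  simpa [hv] using coeff_X_mul_pow v n 0

theorem coeff_succ_X_mul_pow_self (hv : constantCoeff v = 1) (n : ℕ) :
    coeff (n + 1) ((X * v) ^ n) = n * coeff 1 v := by
  rw [coeff_X_mul_pow, coeff_one_pow, hv, one_pow, mul_one]

theorem coeff_one_substPS_X_mul (hv : constantCoeff v = 1) (p : R⟦X⟧) :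
    coeff 1 (substPS (X * v) p) = coeff 1 p := by
  simp [substPS, Finset.sum_range_succ, coeff_one, hv]

theorem coeff_succ_mul_eq_zero_of_substPS_eq_self (hv : constantCoeff v = 1) {p : R⟦X⟧}
    (hp : substPS (X * v) p = p) (m : ℕ) (hlow : ∀ j < m, coeff (j + 1) p = 0) :
    coeff (m + 1) p * ((m + 1 : ℕ) * coeff 1 v) = 0 := by
  have hcoeff := congrArg (coeff (m + 2)) hp
  rw [substPS, coeff_mk, Finset.sum_range_succ, Finset.sum_range_succ,
    coeff_X_mul_pow_self hv, coeff_succ_X_mul_pow_self hv] at hcoeff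
  have hrest : ∑ n ∈ Finset.range (m + 1), coeff n p * coeff (m + 2) ((X * v) ^ n) = 0 := by
    refine Finset.sum_eq_zero fun n hn => ?_
    rcases n with _ | j
    · simp [coeff_one]
    · rw [hlow j (by simpa using hn), zero_mul]
  rw [hrest, zero_add] at hcoeff
  linear_combination hcoeff

theorem eq_C_of_substPS_eq_self [IsDomain R] [CharZero R] (hv : constantCoeff v = 1)
    (hv₁ : coeff 1 v ≠ 0) {p : R⟦X⟧} (hp : substPS (X * v) p = p) : p = C (constantCoeff p) := by
  have hvanish : ∀ m, coeff (m + 1) p = 0 := by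
    intro m
    induction m using Nat.strong_induction_on with
    | _ m ih =>
      have h := coeff_succ_mul_eq_zero_of_substPS_eq_self hv hp m ih
      simpa [hv₁, Nat.cast_add_one_ne_zero] using h
  ext (_ | m)
  · simp
  · simp [hvanish m]

end CommRing

variable {F : Type*} [Field F] {v : F⟦X⟧}

theorem coeff_one_inv (hv : constantCoeff v = 1) : coeff 1 v⁻¹ = -coeff 1 v := by
  have h := congrArg (coeff 1) (PowerSeries.mul_inv_cancel v (by simp [hv]))
  rw [coeff_one_mul, constantCoeff_inv, hv] at h
  simp only [inv_one, mul_one, coeff_one, one_ne_zero, if_false] at h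
  linear_combination h

theorem exists_coe_eq_zpow (hv : constantCoeff v = 1) (d : ℤ) :
    ∃ w : F⟦X⟧, (w : F⸨X⸩) = (v : F⸨X⸩) ^ d ∧ constantCoeff w = 1 ∧ coeff 1 w = d * coeff 1 v := by
  cases d with
  | ofNat n =>
    refine ⟨v ^ n, by simp, by simp [hv], ?_⟩
    simp [coeff_one_pow, hv]
  | negSucc n =>
    refine ⟨v⁻¹ ^ (n + 1), ?_, by simp [hv], ?_⟩
    · rw [zpow_negSucc]
      refine eq_inv_of_mul_eq_one_left ?_
      rw [← map_pow, ← map_mul, ← mul_pow, PowerSeries.inv_mul_cancel v (by simp [hv]), one_pow,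
        map_one]
    · simp [coeff_one_pow, constantCoeff_inv, hv, coeff_one_inv hv, Int.negSucc_eq]
      ring

end PowerSeries

namespace LaurentSeries

variable {F : Type*} [Field F] [CharZero F] {v : F⟦X⟧}

theorem order_eq_zero_of_substL_eq_self (hv : constantCoeff v = 1) (hv₁ : coeff 1 v ≠ 0)
    {f : F⸨X⸩} (hf₀ : f ≠ 0) (hf : substL (X * v) f = f) : f.order = 0 := by
  set p := f.powerSeriesPart
  obtain ⟨w, hw, hw₀, hw₁⟩ := exists_coe_eq_zpow hv f.order
  have hsubst : substL (X * v) f =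
      HahnSeries.single f.order 1 * ((substPS (X * v) p * w : F⟦X⟧) : F⸨X⸩) := by
    rw [substL, map_mul, map_mul, hw, mul_zpow, HahnSeries.ofPowerSeries_X, ← RatFunc.single_zpow]
    ring
  have hp : p = substPS (X * v) p * w := by
    refine HahnSeries.ofPowerSeries_injective (Γ := ℤ)
      (mul_left_cancel₀ (HahnSeries.single_ne_zero (a := f.order) one_ne_zero) ?_)
    rw [← hsubst, hf, single_order_mul_powerSeriesPart]
  have hp₀ : constantCoeff p ≠ 0 := by
    simpa [p, ← coeff_zero_eq_constantCoeff_apply] using mt HahnSeries.coeff_order_eq_zero.mp hf₀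
  have h := congrArg (PowerSeries.coeff 1) hp
  rw [coeff_one_mul, coeff_one_substPS_X_mul hv, hw₀, hw₁, ← coeff_zero_eq_constantCoeff_apply,
    coeff_zero_substPS] at h
  have : (f.order : F) * coeff 1 v * constantCoeff p = 0 := by linear_combination -h
  simpa [hv₁, hp₀] using this

theorem eq_C_of_substL_eq_self (hv : constantCoeff v = 1) (hv₁ : coeff 1 v ≠ 0) {f : F⸨X⸩}
    (hf : substL (X * v) f = f) : ∃ c : F, f = HahnSeries.C c := by
  by_cases hf₀ : f = 0
  · exact ⟨0, by simp [hf₀]⟩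
  have hord := order_eq_zero_of_substL_eq_self hv hv₁ hf₀ hf
  set p := f.powerSeriesPart
  have hcoe : (p : F⸨X⸩) = f := by
    simpa [hord] using single_order_mul_powerSeriesPart f
  have hp : substPS (X * v) p = p := by
    refine HahnSeries.ofPowerSeries_injective (Γ := ℤ) ?_
    rw [hcoe, ← hf, substL, hord, zpow_zero, mul_one]
  refine ⟨constantCoeff p, ?_⟩
  rw [← hcoe, eq_C_of_substPS_eq_self hv hv₁ hp, constantCoeff_C, coe_C]

end LaurentSeries

/-- The field of invariants of the automorphism
`τ : f(t) ↦ f(t/(1+t))` of `ℂ((t))` is exactly `ℂ`. -/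
theorem tau_invariants_eq_constants
    (f : LaurentSeries ℂ) (hf : LaurentSeries.substL (tauArg ℂ) f = f) :
    ∃ c : ℂ, f = HahnSeries.C c := by
  have hv : constantCoeff (1 + X : ℂ⟦X⟧)⁻¹ = 1 := by simp
  have hv₁ : coeff 1 (1 + X : ℂ⟦X⟧)⁻¹ ≠ 0 := by
    simp [coeff_one_inv (by simp : constantCoeff (1 + X : ℂ⟦X⟧) = 1)]
  exact LaurentSeries.eq_C_of_substL_eq_self hv hv₁ hf

end
end

section
/- Let ĝ := exp((e^t − 1)²/2) ∈ ℚ[[t]] (well defined since (e^t − 1)²/2 has zero constant term), write ĝ = Σ_{n≥0} c_n tⁿ, and let f := Σ_{n≥0} n!·c_n tⁿ ∈ ℚ[[t]] be the inverse Borel transform of ĝ (the ordinary generating function of the numbers n!·c_n, which count simple labeled graphs on n nodes all of whose components are complete bipartite graphs). Then f satisfies the second-order difference equation f(t/(1+2t)) + (t/(1+t))·f(t/(1+t)) − t·f(t) = 1 in ℚ[[t]], where f(t/(1+t)) and f(t/(1+2t)) denote substitution of the power series t/(1+t) and t/(1+2t) (both with zero constant term) into f. -/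
/-!
Write `B` for the inverse Borel transform `Σ hₙ tⁿ ↦ Σ n! hₙ tⁿ`, so that `B h = h(0) + t · B h'`.
Both `h ↦ (B h)(t/(1+αt))` and `h ↦ (1+αt) · B(h e^{-αt})` satisfy the recursion
`Φ h = h(0) + t/(1+αt) · Φ h'`, which determines `Φ` coefficient by coefficient; hence
`τ_α (B h) = (1+αt) · B(h e^{-αt})`. For `ĝ` the chain rule gives `ĝ' = ĝ (e^{2t} - e^t)`, so
`(1+2t) · B(ĝ e^{-2t}) = 1 + t · B(ĝ' e^{-2t}) = 1 + t · B ĝ - t · B(ĝ e^{-t})`, and everything cancels.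
-/

noncomputable section

namespace PowerSeries

open Nat

section CommRing

variable {R : Type*} [CommRing R]

theorem substPS_eq_subst {u : R⟦X⟧} (hu : constantCoeff u = 0) (p : R⟦X⟧) :
    substPS u p = p.subst u := by
  ext k
  rw [coeff_subst' (HasSubst.of_constantCoeff_zero' hu), substPS, coeff_mk,
    finsum_eq_sum_of_support_subset (s := Finset.range (k + 1))]
  · simp only [smul_eq_mul]
  · intro n hn
    rw [Function.mem_support] at hn
    by_contra hk
    have hvan : coeff k (u ^ n) = 0 :=
      X_pow_dvd_iff.mp (pow_dvd_pow_of_dvd (X_dvd_iff.mpr hu) n) k (by simpa using hk)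
    simp [hvan] at hn

theorem eq_zero_of_forall_X_pow_dvd {f : R⟦X⟧} (h : ∀ n, X ^ n ∣ f) : f = 0 := by
  ext n
  simpa using X_pow_dvd_iff.mp (h (n + 1)) n n.lt_succ_self

theorem eq_of_eq_C_add_X_mul_apply_derivative (a : R⟦X⟧) {Φ Ψ : R⟦X⟧ → R⟦X⟧}
    (hΦ : ∀ h, Φ h = C (constantCoeff h) + X * a * Φ (d⁄dX R h))
    (hΨ : ∀ h, Ψ h = C (constantCoeff h) + X * a * Ψ (d⁄dX R h)) : Φ = Ψ := by
  have key : ∀ n h, X ^ n ∣ Φ h - Ψ h := by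
    intro n
    induction n with
    | zero => simp
    | succ n ih =>
      intro h
      rw [hΦ, hΨ, add_sub_add_left_eq_sub, ← mul_sub, pow_succ, mul_comm _ X, mul_assoc]
      exact mul_dvd_mul_left X (dvd_mul_of_dvd_right (ih _) a)
  funext h
  exact sub_eq_zero.mp (eq_zero_of_forall_X_pow_dvd fun n => key n h)

def invBorel : R⟦X⟧ →ₗ[R] R⟦X⟧ where
  toFun h := mk fun n => (n ! : R) * coeff n h
  map_add' f g := by ext n; simp only [map_add, mul_add, coeff_mk]
  map_smul' r f := by ext n; simp only [map_smul, smul_eq_mul, coeff_mk, RingHom.id_apply]; ring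

@[simp]
theorem coeff_invBorel (h : R⟦X⟧) (n : ℕ) : coeff n (invBorel h) = n ! * coeff n h := by
  simp [invBorel]

theorem invBorel_eq_C_add_X_mul_invBorel_derivative (h : R⟦X⟧) :
    invBorel h = C (constantCoeff h) + X * invBorel (d⁄dX R h) := by
  ext (_ | n)
  · simp
  · rw [map_add, coeff_C, if_neg n.succ_ne_zero, zero_add, mul_comm X, coeff_succ_mul_X,
      coeff_invBorel, coeff_invBorel, coeff_derivative, factorial_succ]
    push_cast
    ring

theorem substPS_invBorel {u : R⟦X⟧} (hu : constantCoeff u = 0) (h : R⟦X⟧) :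
    substPS u (invBorel h) = C (constantCoeff h) + u * substPS u (invBorel (d⁄dX R h)) := by
  have hu' := HasSubst.of_constantCoeff_zero' hu
  rw [substPS_eq_subst hu, substPS_eq_subst hu, invBorel_eq_C_add_X_mul_invBorel_derivative,
    subst_add hu', subst_mul hu', subst_X hu', subst_C]
  rfl

theorem derivative_exp_subst [Algebra ℚ R] {w : R⟦X⟧} (hw : HasSubst w) :
    d⁄dX R ((exp R).subst w) = (exp R).subst w * d⁄dX R w := by
  rw [derivative_subst hw, derivative_exp]

theorem derivative_rescale_exp [Algebra ℚ R] (a : R) :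
    d⁄dX R (rescale a (exp R)) = C a * rescale a (exp R) := by
  rw [rescale_eq_subst, derivative_exp_subst (HasSubst.smul_X' a), Derivation.map_smul,
    derivative_X]
  simp [smul_eq_C_mul, mul_comm]

theorem one_add_C_mul_X_mul_invBorel_mul_rescale_exp [Algebra ℚ R] (α : R) (h : R⟦X⟧) :
    (1 + C α * X) * invBorel (h * rescale (-α) (exp R)) =
      C (constantCoeff h) + X * invBorel (d⁄dX R h * rescale (-α) (exp R)) := by
  set e := rescale (-α) (exp R)
  have hrec := invBorel_eq_C_add_X_mul_invBorel_derivative (h * e)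
  have hscale : invBorel (h * (C (-α) * e)) = -(C α * invBorel (h * e)) := by
    rw [mul_left_comm, ← smul_eq_C_mul, map_smul, smul_eq_C_mul, map_neg, neg_mul]
  have he : constantCoeff e = 1 := by simp [e, ← coeff_zero_eq_constantCoeff_apply, coeff_rescale]
  rw [Derivation.leibniz, derivative_rescale_exp, smul_eq_mul, smul_eq_mul, map_add, hscale,
    map_mul constantCoeff, he, mul_one, mul_comm e] at hrec
  linear_combination hrec

end CommRing

theorem substPS_X_mul_inv_invBorel {K : Type*} [Field K] [Algebra ℚ K] (α : K) (h : K⟦X⟧) :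
    substPS (X * (1 + C α * X)⁻¹) (invBorel h) =
      (1 + C α * X) * invBorel (h * rescale (-α) (exp K)) := by
  have hunit : (1 + C α * X) * (1 + C α * X)⁻¹ = 1 := PowerSeries.mul_inv_cancel _ (by simp)
  have hu : constantCoeff (X * (1 + C α * X)⁻¹) = 0 := by simp
  refine congrFun (eq_of_eq_C_add_X_mul_apply_derivative (1 + C α * X)⁻¹
    (Ψ := fun h => (1 + C α * X) * invBorel (h * rescale (-α) (exp K)))
    (fun h => substPS_invBorel hu h) fun h => ?_) h
  rw [one_add_C_mul_X_mul_invBorel_mul_rescale_exp]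
  linear_combination (-(X * invBorel (d⁄dX K h * rescale (-α) (exp K)))) * hunit

def expHalfExpSubOneSq : ℚ⟦X⟧ := substPS (C (1 / 2) * (exp ℚ - 1) ^ 2) (exp ℚ)

theorem constantCoeff_expHalfExpSubOneSq : constantCoeff expHalfExpSubOneSq = 1 := by
  rw [← coeff_zero_eq_constantCoeff_apply]
  simp [expHalfExpSubOneSq, substPS]

theorem derivative_expHalfExpSubOneSq :
    d⁄dX ℚ expHalfExpSubOneSq = expHalfExpSubOneSq * (rescale 2 (exp ℚ) - exp ℚ) := by
  have hw : constantCoeff (C (1 / 2 : ℚ) * (exp ℚ - 1) ^ 2) = 0 := by simp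
  rw [expHalfExpSubOneSq, substPS_eq_subst hw, derivative_exp_subst (HasSubst.of_constantCoeff_zero' hw)]
  congr 1
  rw [Derivation.leibniz, Derivation.leibniz_pow, derivative_C, map_sub, derivative_exp,
    Derivation.map_one_eq_zero, show rescale 2 (exp ℚ) = exp ℚ ^ 2 by
      simpa using (exp_pow_eq_rescale_exp (A := ℚ) 2).symm]
  have hC : C (1 / 2 : ℚ) * 2 = 1 := by rw [← map_ofNat C 2, ← map_mul]; norm_num
  simp only [smul_eq_mul, nsmul_eq_mul]
  linear_combination (exp ℚ ^ 2 - exp ℚ) * hC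

end PowerSeries

open PowerSeries in
/-- Let `ĝ = exp((eᵗ−1)²/2) = Σ cₙ tⁿ` and let `f = Σ n!·cₙ tⁿ` be its
inverse Borel transform. Then `f(t/(1+2t)) + (t/(1+t))·f(t/(1+t)) − t·f(t) = 1` in `ℚ[[t]]`. -/
theorem bipartite_graphs_ogf_tau_equation :
    substPS (X * (1 + 2 * X)⁻¹)
        (mk fun n => (n.factorial : ℚ) *
          coeff n (substPS (PowerSeries.C (R := ℚ) (1 / 2) * (exp ℚ - 1) ^ 2) (exp ℚ)))
      + (X * (1 + X)⁻¹) *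
        substPS (X * (1 + X)⁻¹)
          (mk fun n => (n.factorial : ℚ) *
            coeff n (substPS (PowerSeries.C (R := ℚ) (1 / 2) * (exp ℚ - 1) ^ 2) (exp ℚ)))
      - X * (mk fun n => (n.factorial : ℚ) *
          coeff n (substPS (PowerSeries.C (R := ℚ) (1 / 2) * (exp ℚ - 1) ^ 2) (exp ℚ)))
      = 1 := by
  change substPS (X * (1 + C 2 * X)⁻¹) (invBorel expHalfExpSubOneSq)
      + (X * (1 + X)⁻¹) * substPS (X * (1 + X)⁻¹) (invBorel expHalfExpSubOneSq)
      - X * invBorel expHalfExpSubOneSq = 1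
  have hτ₁ := substPS_X_mul_inv_invBorel 1 expHalfExpSubOneSq
  rw [map_one, one_mul] at hτ₁
  have hcancel : (X * (1 + X)⁻¹) * (1 + X) = (X : ℚ⟦X⟧) := by
    rw [mul_assoc, PowerSeries.inv_mul_cancel _ (by simp), mul_one]
  have hg : d⁄dX ℚ expHalfExpSubOneSq * rescale (-2) (exp ℚ) =
      expHalfExpSubOneSq - expHalfExpSubOneSq * rescale (-1) (exp ℚ) := by
    have h₂ : rescale 2 (exp ℚ) * rescale (-2) (exp ℚ) = 1 := by
      simpa using exp_mul_exp_eq_exp_add (A := ℚ) 2 (-2)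
    have h₁ : exp ℚ * rescale (-2) (exp ℚ) = rescale (-1) (exp ℚ) := by
      simpa [show (1 : ℚ) + -2 = -1 by norm_num] using exp_mul_exp_eq_exp_add (A := ℚ) 1 (-2)
    rw [derivative_expHalfExpSubOneSq]
    linear_combination expHalfExpSubOneSq * h₂ - expHalfExpSubOneSq * h₁
  rw [substPS_X_mul_inv_invBorel, one_add_C_mul_X_mul_invBorel_mul_rescale_exp, hτ₁,
    ← mul_assoc, hcancel, hg, constantCoeff_expHalfExpSubOneSq, map_sub, map_one]
  ring

end
end
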